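/- arXiv:2507.19630 — 4 statements merged into one kernel-verified Lean document; each statement's English description precedes it below -/
import Mathlib

section
/- Graded Context Rule: in any graded equational theory E over a Lawverean quantale, for all terms u, v, t, degree ε, and position p of t, if ε ⊩ u =_E v is derivable then ∂_p(t)(ε) ⊩ t[u]_p =_E t[v]_p is derivable. -/
/-! Graded terms over a `Φ`-graded signature: each function symbol carries a modal arity,
a list of quantale endomorphisms (one per argument). -/

/-- A graded signature: function symbols together with their modal arities,
lists of maps `Ω → Ω` (intended to be quantale endomorphisms, CBEs). -/
structure GradedSig (Ω : Type*) where
  Sym : Type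
  arity : Sym → List (Ω → Ω)

/-- First-order terms over a graded signature, with variables indexed by `ℕ`. -/
inductive GTerm {Ω : Type*} (F : GradedSig Ω) : Type
  | var : ℕ → GTerm F
  | app : (f : F.Sym) → (Fin (F.arity f).length → GTerm F) → GTerm F

namespace GTerm

variable {Ω : Type*} {F : GradedSig Ω}

/-- The subterm of `t` at position `p` (`none` if `p` is not a position of `t`). -/
def subtermAt : GTerm F → List ℕ → Option (GTerm F)
  | t, [] => some t
  | var _, _ :: _ => none
  | app f args, i :: p =>
      if h : i < (F.arity f).length then subtermAt (args ⟨i, h⟩) p else none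

/-- `replaceAt t p u` is `t[u]_p`, the replacement of the subterm of `t` at `p` by `u`
(returning `t` unchanged on the illegal cases). -/
def replaceAt : GTerm F → List ℕ → GTerm F → GTerm F
  | _, [], u => u
  | var v, _ :: _, _ => var v
  | app f args, i :: p, u =>
      app f (fun j => if (j : ℕ) = i then replaceAt (args j) p u else args j)

/-- The grade `∂_p(t)` of position `p` in term `t`: the composition of the modal grades
along `p`, with `∂_λ(t) = id` and `∂_{i.p}(f(t₁,…,tₙ)) = φᵢ ∘ ∂_p(tᵢ)`. -/
def gradeAt : GTerm F → List ℕ → (Ω → Ω)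
  | _, [] => id
  | var _, _ :: _ => id
  | app f args, i :: p =>
      if h : i < (F.arity f).length then
        ((F.arity f).get ⟨i, h⟩) ∘ gradeAt (args ⟨i, h⟩) p
      else id

/-- Application of a substitution `σ : ℕ → GTerm F` to a term. -/
def subst (σ : ℕ → GTerm F) : GTerm F → GTerm F
  | var v => σ v
  | app f args => app f (fun j => subst σ (args j))

/-- The set of variables of a term. -/
def vars : GTerm F → Set ℕ
  | var v => {v}
  | app _ args => ⋃ j, vars (args j)

/-- The set of positions of a term. -/
def Pos (t : GTerm F) : Set (List ℕ) := {p | (subtermAt t p).isSome}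

/-- The set of non-variable (function symbol) positions of a term. -/
def FunPos (t : GTerm F) : Set (List ℕ) :=
  {p | ∃ f args, subtermAt t p = some (app f args)}

/-- A term is linear if no variable occurs at two distinct positions. -/
def Linear (t : GTerm F) : Prop :=
  ∀ v p q, subtermAt t p = some (var v) → subtermAt t q = some (var v) → p = q

end GTerm

/-- A quantale endomorphism (change-of-base endofunctor, CBE): a monotone map preserving
the unit, the tensor, and arbitrary joins. -/
def IsCBE {Ω : Type*} [Monoid Ω] [CompleteLattice Ω] (φ : Ω → Ω) : Prop :=
  Monotone φ ∧ φ 1 = 1 ∧ (∀ a b : Ω, φ (a * b) = φ a * φ b) ∧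
    ∀ s : Set Ω, φ (sSup s) = sSup (φ '' s)

/-- A `Φ`-graded signature is one whose modal arities consist of CBEs. -/
def GradedSig.IsCBESig {Ω : Type*} [Monoid Ω] [CompleteLattice Ω] (F : GradedSig Ω) : Prop :=
  ∀ f : F.Sym, ∀ φ ∈ F.arity f, IsCBE φ

/-- A (commutative unital) quantale is Lawverean if it is integral (`κ = ⊤`),
cointegral (`ε ⊗ δ = ⊥` implies `ε = ⊥` or `δ = ⊥`), and nontrivial (`κ ≠ ⊥`). -/
def Lawverean (Ω : Type*) [CommMonoid Ω] [CompleteLattice Ω] : Prop :=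
  (1 : Ω) = ⊤ ∧ (∀ a b : Ω, a * b = ⊥ → a = ⊥ ∨ b = ⊥) ∧ (1 : Ω) ≠ ⊥
/-- The graded quantitative equational theory `=_E` generated by a set `E` of
`Ω`-equalities `(t, ε, s)`, closed under the rules (Ax), (Refl), (Sym), (Trans),
(Ampl), (Subst), (Ord), and (Join). -/
inductive EqDeriv {Ω : Type*} [CommMonoid Ω] [CompleteLattice Ω] (F : GradedSig Ω)
    (E : Set (GTerm F × Ω × GTerm F)) : Ω → GTerm F → GTerm F → Prop
  | ax {t ε s} : (t, ε, s) ∈ E → EqDeriv F E ε t s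
  | refl (t) : EqDeriv F E 1 t t
  | symm {ε t s} : EqDeriv F E ε t s → EqDeriv F E ε s t
  | trans {ε δ t s r} : EqDeriv F E ε t s → EqDeriv F E δ s r → EqDeriv F E (ε * δ) t r
  | ampl (f : F.Sym) (ts ss : Fin (F.arity f).length → GTerm F)
      (εs : Fin (F.arity f).length → Ω) :
      (∀ j, EqDeriv F E (εs j) (ts j) (ss j)) →
      EqDeriv F E (List.ofFn (fun j => (F.arity f).get j (εs j))).prod
        (GTerm.app f ts) (GTerm.app f ss)
  | subst {ε t s} (σ : ℕ → GTerm F) :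
      EqDeriv F E ε t s → EqDeriv F E ε (t.subst σ) (s.subst σ)
  | ord {ε δ t s} : EqDeriv F E ε t s → δ ≤ ε → EqDeriv F E δ t s
  | join {ε δ t s} : EqDeriv F E ε t s → EqDeriv F E δ t s → EqDeriv F E (ε ⊔ δ) t s

/-! Induction on the position `p`. At a step `i :: q` through `f(t₁,…,tₙ)`, amplify with the
derivation for `tᵢ` in argument `i` and reflexivity (degree `1`) in all other arguments; since
every modal grade preserves the unit, the amplified degree collapses to `φᵢ(∂_q(tᵢ)(ε))`. -/

namespace GTerm

variable {Ω : Type*} {F : GradedSig Ω}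

theorem cons_not_mem_Pos_var (w i : ℕ) (q : List ℕ) : i :: q ∉ Pos (var w : GTerm F) := by
  simp [Pos, subtermAt]

theorem cons_mem_Pos_app_iff {f : F.Sym} {args : Fin (F.arity f).length → GTerm F} {i : ℕ}
    {q : List ℕ} :
    i :: q ∈ Pos (app f args) ↔ ∃ hi : i < (F.arity f).length, q ∈ Pos (args ⟨i, hi⟩) := by
  by_cases hi : i < (F.arity f).length <;> simp [Pos, subtermAt, hi]

theorem gradeAt_app_cons {f : F.Sym} {args : Fin (F.arity f).length → GTerm F} {i : ℕ}
    (hi : i < (F.arity f).length) (q : List ℕ) :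
    gradeAt (app f args) (i :: q) = (F.arity f).get ⟨i, hi⟩ ∘ gradeAt (args ⟨i, hi⟩) q := by
  simp [gradeAt, hi]

end GTerm

namespace EqDeriv

open GTerm

variable {Ω : Type*} [CommMonoid Ω] [CompleteLattice Ω] {F : GradedSig Ω}
  {E : Set (GTerm F × Ω × GTerm F)}

theorem ampl_single (f : F.Sym) (i : Fin (F.arity f).length)
    (hf : ∀ j ≠ i, (F.arity f).get j 1 = 1) {ts ss : Fin (F.arity f).length → GTerm F}
    (hts : ∀ j ≠ i, ts j = ss j) {δ : Ω} (h : EqDeriv F E δ (ts i) (ss i)) :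
    EqDeriv F E ((F.arity f).get i δ) (app f ts) (app f ss) := by
  set εs : Fin (F.arity f).length → Ω := Pi.mulSingle i δ
  have hargs : ∀ j, EqDeriv F E (εs j) (ts j) (ss j) := by
    intro j
    by_cases hj : j = i
    · subst hj
      simpa [εs] using h
    · simpa [εs, hj, hts j hj] using EqDeriv.refl (E := E) (ss j)
  have hdeg : (List.ofFn fun j => (F.arity f).get j (εs j)).prod = (F.arity f).get i δ := by
    rw [List.prod_ofFn, Finset.prod_eq_single i (fun j _ hj => by simp [εs, hj, hf j hj])
      (by simp)]
    simp [εs]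
  simpa only [hdeg] using ampl f ts ss _ hargs

theorem replaceAt (hF : ∀ f, ∀ φ ∈ F.arity f, φ 1 = 1) {u v : GTerm F} {ε : Ω}
    (h : EqDeriv F E ε u v) (t : GTerm F) {p : List ℕ} (hp : p ∈ t.Pos) :
    EqDeriv F E (t.gradeAt p ε) (t.replaceAt p u) (t.replaceAt p v) := by
  induction t generalizing p with
  | var w =>
    cases p with
    | nil => exact h
    | cons i q => exact absurd hp (cons_not_mem_Pos_var w i q)
  | app f args ih =>
    cases p with
    | nil => exact h
    | cons i q =>
      obtain ⟨hi, hq⟩ := cons_mem_Pos_app_iff.mp hp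
      rw [gradeAt_app_cons hi]
      refine ampl_single f ⟨i, hi⟩ (fun j _ => hF f _ (List.get_mem _ j)) ?_ ?_
      · intro j hj
        simp [Fin.val_ne_of_ne hj]
      · simpa using ih ⟨i, hi⟩ hq

end EqDeriv

theorem graded_context_rule_general {Ω : Type*} [CommMonoid Ω] [CompleteLattice Ω]
    {F : GradedSig Ω} (hF : F.IsCBESig)
    (E : Set (GTerm F × Ω × GTerm F)) {u v t : GTerm F} {ε : Ω} {p : List ℕ}
    (hp : p ∈ GTerm.Pos t) (h : EqDeriv F E ε u v) :
    EqDeriv F E (GTerm.gradeAt t p ε) (GTerm.replaceAt t p u) (GTerm.replaceAt t p v) :=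
  h.replaceAt (fun f φ hφ => (hF f φ hφ).2.1) t hp

/-- Graded Context Rule: in a graded equational theory `E` over a Lawverean quantale,
if `ε ⊩ u =_E v` is derivable, then `∂_p(t)(ε) ⊩ t[u]_p =_E t[v]_p` is derivable for any
term `t` and position `p` of `t`. -/
theorem graded_context_rule {Ω : Type*} [CommMonoid Ω] [CompleteLattice Ω] [IsQuantale Ω]
    (hΩ : Lawverean Ω) {F : GradedSig Ω} (hF : F.IsCBESig)
    (E : Set (GTerm F × Ω × GTerm F)) {u v t : GTerm F} {ε : Ω} {p : List ℕ}
    (hp : p ∈ GTerm.Pos t) (h : EqDeriv F E ε u v) :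
    EqDeriv F E (GTerm.gradeAt t p ε) (GTerm.replaceAt t p u) (GTerm.replaceAt t p v) :=
  graded_context_rule_general hF E hp h
end

section
/- Completeness of rewriting for graded equational theories: if ε ⊩ t =_R s is derivable in the graded equational theory generated by an (Ω,Φ)-TRS R, then there exist finitely many degrees δ₁,…,δₙ with δ₁ ∨ … ∨ δₙ ≽ ε such that t ↔*_{R,δᵢ} s holds for each i. -/
/-- An `(Ω,Φ)`-term rewriting system: every rule `ε ⊩ l ↦ r` has a non-variable
left-hand side and `Var(r) ⊆ Var(l)`. -/
def IsTRS {Ω : Type*} {F : GradedSig Ω} (R : Set (GTerm F × Ω × GTerm F)) : Prop :=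
  ∀ l ε r, (l, ε, r) ∈ R → (∀ v, l ≠ GTerm.var v) ∧ GTerm.vars r ⊆ GTerm.vars l

/-- One-step graded rewriting: from a rule `δ ⊩ l ↦ r` infer
`∂_p(t)(δ) ⊩ t = t[lσ]_p → t[rσ]_p`. -/
def Rew {Ω : Type*} {F : GradedSig Ω} (R : Set (GTerm F × Ω × GTerm F))
    (ε : Ω) (t s : GTerm F) : Prop :=
  ∃ (l : GTerm F) (δ : Ω) (r : GTerm F) (σ : ℕ → GTerm F) (p : List ℕ), (l, δ, r) ∈ R ∧
    GTerm.subtermAt t p = some (GTerm.subst σ l) ∧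
    s = GTerm.replaceAt t p (GTerm.subst σ r) ∧
    ε = GTerm.gradeAt t p δ

/-- Graded reflexive-transitive closure of the symmetric rewrite relation
`↔_R = →_R ∪ ←_R`, combining degrees of consecutive steps by `⊗`
(with the unit `κ` for zero steps): graded convertibility `t ↔*_{R,ε} s`. -/
inductive ConvStar {Ω : Type*} [Monoid Ω] {F : GradedSig Ω}
    (R : Set (GTerm F × Ω × GTerm F)) : Ω → GTerm F → GTerm F → Prop
  | refl (t) : ConvStar R 1 t t
  | step {ε δ t u s} : (Rew R ε t u ∨ Rew R ε u t) → ConvStar R δ u s →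
      ConvStar R (ε * δ) t s

/-- Graded multi-step rewriting `t →*_{R,ε} s`, combining degrees by `⊗`. -/
inductive RewStar {Ω : Type*} [Monoid Ω] {F : GradedSig Ω}
    (R : Set (GTerm F × Ω × GTerm F)) : Ω → GTerm F → GTerm F → Prop
  | refl (t) : RewStar R 1 t t
  | step {ε δ t u s} : Rew R ε t u → RewStar R δ u s → RewStar R (ε * δ) t s

/-!
Each rule of the graded equational theory is matched by a closure property of graded
convertibility up to finite joins, i.e. of "`ε` is below a finite join of degrees `δᵢ` with
`t ↔*_{R,δᵢ} s`". (Trans) takes the pairwise products of the degrees, which is sound because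
`⊗` distributes over joins; (Join) concatenates the two families; (Ampl) rewrites one argument
at a time, and a rewrite step at position `j.p` of `f(…)` has degree `φⱼ` applied to the
degree of the step inside the `j`-th argument. Since `φⱼ` is a quantale endomorphism it
carries conversions of degree `δ` to conversions of degree `φⱼ δ` and preserves joins.
-/

namespace GTerm

variable {Ω : Type*} {F : GradedSig Ω}

@[simp]
theorem subtermAt_nil (t : GTerm F) : subtermAt t [] = some t := by cases t <;> rfl

@[simp]
theorem replaceAt_nil (t u : GTerm F) : replaceAt t [] u = u := by cases t <;> rfl

@[simp]
theorem gradeAt_nil (t : GTerm F) : gradeAt (Ω := Ω) t [] = id := by cases t <;> rfl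

theorem subst_subst (σ τ : ℕ → GTerm F) (t : GTerm F) :
    (t.subst τ).subst σ = t.subst fun v => (τ v).subst σ := by
  induction t with
  | var v => rfl
  | app f args ih => exact congrArg (app f) (funext ih)

@[simp]
theorem subst_var (t : GTerm F) : t.subst var = t := by
  induction t with
  | var v => rfl
  | app f args ih => exact congrArg (app f) (funext ih)

theorem exists_of_subtermAt_cons {t w : GTerm F} {i : ℕ} {p : List ℕ}
    (h : subtermAt t (i :: p) = some w) :
    ∃ f args, ∃ hi : i < (F.arity f).length,
      t = app f args ∧ subtermAt (args ⟨i, hi⟩) p = some w := by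
  cases t with
  | var v => cases h
  | app f args =>
    simp only [subtermAt] at h
    split at h
    · exact ⟨f, args, ‹_›, rfl, h⟩
    · cases h

theorem subtermAt_subst (σ : ℕ → GTerm F) {p : List ℕ} :
    ∀ {t w : GTerm F}, subtermAt t p = some w → subtermAt (t.subst σ) p = some (w.subst σ) := by
  induction p with
  | nil => intro t w h; simp_all
  | cons i p ih =>
    intro t w h
    obtain ⟨f, args, hi, rfl, hsub⟩ := exists_of_subtermAt_cons h
    simpa [subst, subtermAt, hi] using ih hsub

theorem replaceAt_subst (σ : ℕ → GTerm F) {p : List ℕ} :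
    ∀ {t w : GTerm F}, subtermAt t p = some w →
      ∀ u, (replaceAt t p u).subst σ = replaceAt (t.subst σ) p (u.subst σ) := by
  induction p with
  | nil => simp
  | cons i p ih =>
    intro t w h u
    obtain ⟨f, args, hi, rfl, hsub⟩ := exists_of_subtermAt_cons h
    simp only [subst, replaceAt]
    congr 1
    funext k
    split_ifs with hk
    · obtain rfl : k = ⟨i, hi⟩ := Fin.ext hk
      exact ih hsub u
    · rfl

theorem gradeAt_subst (σ : ℕ → GTerm F) {p : List ℕ} :
    ∀ {t w : GTerm F}, subtermAt t p = some w → gradeAt (Ω := Ω) (t.subst σ) p = gradeAt t p := by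
  induction p with
  | nil => simp
  | cons i p ih =>
    intro t w h
    obtain ⟨f, args, hi, rfl, hsub⟩ := exists_of_subtermAt_cons h
    simp only [subst, gradeAt, dif_pos hi, ih hsub]

end GTerm

open GTerm

section Rewriting

variable {Ω : Type*} {F : GradedSig Ω} {R : Set (GTerm F × Ω × GTerm F)}

theorem Rew.subst (σ : ℕ → GTerm F) {ε : Ω} {t s : GTerm F} (h : Rew R ε t s) :
    Rew R ε (t.subst σ) (s.subst σ) := by
  obtain ⟨l, δ, r, τ, p, hmem, hsub, rfl, rfl⟩ := h
  refine ⟨l, δ, r, fun v => (τ v).subst σ, p, hmem, ?_, ?_, by rw [gradeAt_subst σ hsub]⟩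
  · rw [← subst_subst]
    exact subtermAt_subst σ hsub
  · rw [replaceAt_subst σ hsub, subst_subst]

theorem Rew.app_update {f : F.Sym} (args : Fin (F.arity f).length → GTerm F)
    (j : Fin (F.arity f).length) {ε : Ω} {u v : GTerm F} (h : Rew R ε u v) :
    Rew R ((F.arity f).get j ε)
      (app f (Function.update args j u)) (app f (Function.update args j v)) := by
  obtain ⟨l, δ, r, τ, p, hmem, hsub, rfl, rfl⟩ := h
  refine ⟨l, δ, r, τ, (j : ℕ) :: p, hmem, ?_, ?_, ?_⟩
  · simpa [subtermAt] using hsub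
  · simp only [replaceAt]
    congr 1
    funext k
    by_cases hk : k = j
    · subst hk
      simp
    · simp [hk, Fin.val_ne_of_ne hk]
  · simp [gradeAt]

end Rewriting

namespace ConvStar

variable {Ω : Type*} {F : GradedSig Ω} {R : Set (GTerm F × Ω × GTerm F)}

section Monoid

variable [Monoid Ω]

theorem single {ε : Ω} {t s : GTerm F} (h : Rew R ε t s ∨ Rew R ε s t) : ConvStar R ε t s :=
  mul_one ε ▸ step h (refl s)

theorem trans {ε δ : Ω} {t u s : GTerm F} (htu : ConvStar R ε t u) (hus : ConvStar R δ u s) :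
    ConvStar R (ε * δ) t s := by
  induction htu with
  | refl t => rwa [one_mul]
  | step h _ ih => rw [mul_assoc]; exact step h (ih hus)

theorem subst (σ : ℕ → GTerm F) {ε : Ω} {t s : GTerm F} (h : ConvStar R ε t s) :
    ConvStar R ε (t.subst σ) (s.subst σ) := by
  induction h with
  | refl t => exact refl _
  | step h _ ih => exact step (h.imp (Rew.subst σ) (Rew.subst σ)) ih

theorem app_update {f : F.Sym} (args : Fin (F.arity f).length → GTerm F)
    (j : Fin (F.arity f).length) (h1 : (F.arity f).get j 1 = 1)
    (hmul : ∀ a b, (F.arity f).get j (a * b) = (F.arity f).get j a * (F.arity f).get j b)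
    {ε : Ω} {u v : GTerm F} (h : ConvStar R ε u v) :
    ConvStar R ((F.arity f).get j ε)
      (app f (Function.update args j u)) (app f (Function.update args j v)) := by
  induction h with
  | refl t => rw [h1]; exact refl _
  | step h _ ih =>
    rw [hmul]
    exact step (h.imp (Rew.app_update args j) (Rew.app_update args j)) ih

end Monoid

theorem symm [CommMonoid Ω] {ε : Ω} {t s : GTerm F} (h : ConvStar R ε t s) :
    ConvStar R ε s t := by
  induction h with
  | refl t => exact refl t
  | step h _ ih => rw [mul_comm]; exact ih.trans (single h.symm)

end ConvStar

theorem IsCBE.map_iSup {Ω ι : Type*} [Monoid Ω] [CompleteLattice Ω] {φ : Ω → Ω} (hφ : IsCBE φ)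
    (a : ι → Ω) : φ (⨆ i, a i) = ⨆ i, φ (a i) := by
  rw [iSup, hφ.2.2.2, ← Set.range_comp, iSup, Function.comp_def]

section JoinConvertible

variable {Ω : Type*} [CommMonoid Ω] [CompleteLattice Ω] {F : GradedSig Ω}

def JoinConvertible (R : Set (GTerm F × Ω × GTerm F)) (ε : Ω) (t s : GTerm F) : Prop :=
  ∃ (ι : Type) (_ : Finite ι) (δ : ι → Ω), ε ≤ ⨆ i, δ i ∧ ∀ i, ConvStar R (δ i) t s

variable {R : Set (GTerm F × Ω × GTerm F)} {ε δ : Ω} {t u s : GTerm F}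

namespace JoinConvertible

theorem of_convStar (h : ConvStar R ε t s) : JoinConvertible R ε t s :=
  ⟨Unit, inferInstance, fun _ => ε, le_iSup (fun _ => ε) (), fun _ => h⟩

theorem mono (hle : δ ≤ ε) (h : JoinConvertible R ε t s) : JoinConvertible R δ t s :=
  let ⟨ι, hι, a, ha, hconv⟩ := h
  ⟨ι, hι, a, hle.trans ha, hconv⟩

theorem symm (h : JoinConvertible R ε t s) : JoinConvertible R ε s t :=
  let ⟨ι, hι, a, ha, hconv⟩ := h
  ⟨ι, hι, a, ha, fun i => (hconv i).symm⟩

theorem subst (σ : ℕ → GTerm F) (h : JoinConvertible R ε t s) :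
    JoinConvertible R ε (t.subst σ) (s.subst σ) :=
  let ⟨ι, hι, a, ha, hconv⟩ := h
  ⟨ι, hι, a, ha, fun i => (hconv i).subst σ⟩

theorem sup (h₁ : JoinConvertible R ε t s) (h₂ : JoinConvertible R δ t s) :
    JoinConvertible R (ε ⊔ δ) t s := by
  obtain ⟨ι, _, a, ha, hconv_a⟩ := h₁
  obtain ⟨κ, _, b, hb, hconv_b⟩ := h₂
  refine ⟨ι ⊕ κ, inferInstance, Sum.elim a b, ?_, Sum.forall.2 ⟨hconv_a, hconv_b⟩⟩
  rw [iSup_sum]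
  exact sup_le_sup ha hb

theorem trans [IsQuantale Ω] (h₁ : JoinConvertible R ε t u) (h₂ : JoinConvertible R δ u s) :
    JoinConvertible R (ε * δ) t s := by
  obtain ⟨ι, _, a, ha, hconv_a⟩ := h₁
  obtain ⟨κ, _, b, hb, hconv_b⟩ := h₂
  refine ⟨ι × κ, inferInstance, fun k => a k.1 * b k.2, ?_,
    fun k => (hconv_a k.1).trans (hconv_b k.2)⟩
  calc ε * δ ≤ (⨆ i, a i) * ⨆ k, b k := mul_le_mul' ha hb
    _ = ⨆ i, ⨆ k, a i * b k := by
      simp only [Quantale.iSup_mul_distrib, Quantale.mul_iSup_distrib, iSup_comm (ι := κ)]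
    _ = ⨆ k : ι × κ, a k.1 * b k.2 := (iSup_prod (f := fun k : ι × κ => a k.1 * b k.2)).symm

theorem app_update {f : F.Sym} (args : Fin (F.arity f).length → GTerm F)
    (j : Fin (F.arity f).length) (hφ : IsCBE ((F.arity f).get j))
    (h : JoinConvertible R ε t s) :
    JoinConvertible R ((F.arity f).get j ε)
      (app f (Function.update args j t)) (app f (Function.update args j s)) := by
  obtain ⟨ι, hι, a, ha, hconv⟩ := h
  refine ⟨ι, hι, fun i => (F.arity f).get j (a i), ?_,
    fun i => (hconv i).app_update args j hφ.2.1 hφ.2.2.1⟩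
  rw [← hφ.map_iSup]
  exact hφ.1 ha

theorem app [IsQuantale Ω] {f : F.Sym} (hφ : ∀ φ ∈ F.arity f, IsCBE φ)
    {ts ss : Fin (F.arity f).length → GTerm F} {εs : Fin (F.arity f).length → Ω}
    (h : ∀ j, JoinConvertible R (εs j) (ts j) (ss j)) :
    JoinConvertible R (List.ofFn fun j => (F.arity f).get j (εs j)).prod
      (GTerm.app f ts) (GTerm.app f ss) := by
  classical
  suffices ∀ S : Finset (Fin (F.arity f).length), JoinConvertible R
      (∏ j ∈ S, (F.arity f).get j (εs j)) (GTerm.app f (S.piecewise ts ss)) (GTerm.app f ss) by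
    simpa [List.prod_ofFn] using this Finset.univ
  intro S
  induction S using Finset.induction with
  | empty => simpa using of_convStar (ConvStar.refl _)
  | insert j S hj ih =>
    have hstep := (h j).app_update (S.piecewise ts ss) j (hφ _ (List.get_mem _ j))
    have hupdate : Function.update (S.piecewise ts ss) j (ss j) = S.piecewise ts ss :=
      Function.update_eq_self_iff.2 (S.piecewise_eq_of_notMem ts ss hj).symm
    rw [hupdate, ← Finset.piecewise_insert] at hstep
    rw [Finset.prod_insert hj]
    exact hstep.trans ih

theorem exists_fin (h : JoinConvertible R ε t s) :
    ∃ (n : ℕ) (δ : Fin n → Ω), ε ≤ ⨆ i, δ i ∧ ∀ i, ConvStar R (δ i) t s := by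
  obtain ⟨ι, _, a, ha, hconv⟩ := h
  let e := Finite.equivFin ι
  exact ⟨_, a ∘ e.symm, by rwa [Function.comp_def, e.symm.iSup_comp], fun i => hconv _⟩

end JoinConvertible

end JoinConvertible

theorem graded_rewriting_complete_general {Ω : Type*} [CommMonoid Ω] [CompleteLattice Ω]
    [IsQuantale Ω] {F : GradedSig Ω} (hF : F.IsCBESig)
    (R : Set (GTerm F × Ω × GTerm F)) {ε : Ω} {t s : GTerm F}
    (h : EqDeriv F R ε t s) :
    ∃ (n : ℕ) (δ : Fin n → Ω), ε ≤ ⨆ i, δ i ∧ ∀ i, ConvStar R (δ i) t s := by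
  refine JoinConvertible.exists_fin ?_
  induction h with
  | ax hmem => exact .of_convStar (.single (.inl ⟨_, _, _, var, [], hmem, by simp, by simp, by simp⟩))
  | refl t => exact .of_convStar (.refl t)
  | symm _ ih => exact ih.symm
  | trans _ _ ih₁ ih₂ => exact ih₁.trans ih₂
  | ampl f ts ss εs _ ih => exact .app (hF f) ih
  | subst σ _ ih => exact ih.subst σ
  | ord _ hle ih => exact ih.mono hle
  | join _ _ ih₁ ih₂ => exact ih₁.sup ih₂

/-- Completeness of rewriting for graded equational theories: if `ε ⊩ t =_R s` is
derivable in the graded equational theory generated by an `(Ω,Φ)`-TRS `R`, then there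
exist finitely many degrees `δ₁,…,δₙ` with `δ₁ ∨ … ∨ δₙ ≽ ε` such that `t ↔*_{R,δᵢ} s`
for each `i`. -/
theorem graded_rewriting_complete {Ω : Type*} [CommMonoid Ω] [CompleteLattice Ω]
    [IsQuantale Ω] (hΩ : Lawverean Ω) {F : GradedSig Ω} (hF : F.IsCBESig)
    (R : Set (GTerm F × Ω × GTerm F)) (hR : IsTRS R) {ε : Ω} {t s : GTerm F}
    (h : EqDeriv F R ε t s) :
    ∃ (n : ℕ) (δ : Fin n → Ω), ε ≤ ⨆ i, δ i ∧ ∀ i, ConvStar R (δ i) t s :=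
  graded_rewriting_complete_general hF R h
end

section
/- Quantitative Church–Rosser: if R is a confluent (Ω,Φ)-TRS and t ↔*_{R,ε} s, then t and s are (R,δ)-joinable for some δ ≽ ε. -/
/-- `t` and `s` are `(R,δ)`-joinable: `t →*_{R,δ₁} r` and `s →*_{R,δ₂} r` with
`δ₁ ⊗ δ₂ = δ`. -/
def Joinable {Ω : Type*} [Monoid Ω] {F : GradedSig Ω}
    (R : Set (GTerm F × Ω × GTerm F)) (δ : Ω) (t s : GTerm F) : Prop :=
  ∃ (δ₁ δ₂ : Ω) (r : GTerm F), RewStar R δ₁ t r ∧ RewStar R δ₂ s r ∧ δ₁ * δ₂ = δ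

/-- `R` is confluent: whenever `t →*_{R,ε₁} s₁` and `t →*_{R,ε₂} s₂`, there exists
`δ ≽ ε₁ ⊗ ε₂` such that `s₁` and `s₂` are `(R,δ)`-joinable. -/
def Confluent {Ω : Type*} [Monoid Ω] [CompleteLattice Ω] {F : GradedSig Ω}
    (R : Set (GTerm F × Ω × GTerm F)) : Prop :=
  ∀ (ε₁ ε₂ : Ω) (t s₁ s₂ : GTerm F), RewStar R ε₁ t s₁ → RewStar R ε₂ t s₂ →
    ∃ δ : Ω, ε₁ * ε₂ ≤ δ ∧ Joinable R δ s₁ s₂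

/-! A forward step of a conversion is prepended to the join of the rest; a backward step
`u → t` meets the rewrite sequence `u →* r` in a peak, which confluence closes with a
degree at least that of the peak. -/

namespace RewStar

variable {Ω : Type*} [Monoid Ω] {F : GradedSig Ω} {R : Set (GTerm F × Ω × GTerm F)}

theorem single {ε : Ω} {t u : GTerm F} (h : Rew R ε t u) : RewStar R ε t u := by
  simpa using step h (refl u)

theorem trans {a b : Ω} {t u v : GTerm F} (h₁ : RewStar R a t u) (h₂ : RewStar R b u v) :
    RewStar R (a * b) t v := by
  induction h₁ with
  | refl => simpa using h₂
  | step hs _ ih => rw [mul_assoc]; exact step hs (ih h₂)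

end RewStar

namespace Joinable

variable {Ω : Type*} {F : GradedSig Ω} {R : Set (GTerm F × Ω × GTerm F)}

theorem refl [Monoid Ω] (t : GTerm F) : Joinable R 1 t t :=
  ⟨1, 1, t, .refl t, .refl t, one_mul 1⟩

theorem rew_left [Monoid Ω] {ε δ : Ω} {t u s : GTerm F} (h : Rew R ε t u)
    (hj : Joinable R δ u s) : Joinable R (ε * δ) t s := by
  obtain ⟨a, b, r, hur, hsr, rfl⟩ := hj
  exact ⟨ε * a, b, r, .step h hur, hsr, mul_assoc ε a b⟩

end Joinable

theorem Confluent.exists_joinable_of_rew_of_joinable {Ω : Type*} [CommMonoid Ω]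
    [CompleteLattice Ω] [IsQuantale Ω] {F : GradedSig Ω} {R : Set (GTerm F × Ω × GTerm F)}
    (hc : Confluent R) {ε δ : Ω} {t u s : GTerm F} (h : Rew R ε u t)
    (hj : Joinable R δ u s) : ∃ γ, ε * δ ≤ γ ∧ Joinable R γ t s := by
  obtain ⟨a, b, r, hur, hsr, rfl⟩ := hj
  obtain ⟨γ, hγ, c, d, w, htw, hrw, rfl⟩ := hc ε a u t r (.single h) hur
  refine ⟨c * (b * d), ?_, c, b * d, w, htw, hsr.trans hrw, rfl⟩
  calc ε * (a * b) = ε * a * b := (mul_assoc ε a b).symm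
    _ ≤ c * d * b := mul_le_mul_left hγ b
    _ = c * (b * d) := by rw [mul_assoc, mul_comm d b]

theorem quantitative_church_rosser_general {Ω : Type*} [CommMonoid Ω] [CompleteLattice Ω]
    [IsQuantale Ω] {F : GradedSig Ω}
    (R : Set (GTerm F × Ω × GTerm F)) (hc : Confluent R)
    {ε : Ω} {t s : GTerm F} (h : ConvStar R ε t s) :
    ∃ δ : Ω, ε ≤ δ ∧ Joinable R δ t s := by
  induction h with
  | refl t => exact ⟨1, le_rfl, .refl t⟩
  | step hstep _ ih =>
    obtain ⟨δ, hδ, hj⟩ := ih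
    rcases hstep with hfwd | hbwd
    · exact ⟨_, mul_le_mul_right hδ _, hj.rew_left hfwd⟩
    · obtain ⟨γ, hγ, hj'⟩ := hc.exists_joinable_of_rew_of_joinable hbwd hj
      exact ⟨γ, (mul_le_mul_right hδ _).trans hγ, hj'⟩

/-- Quantitative Church–Rosser: if `R` is a confluent `(Ω,Φ)`-TRS and `t ↔*_{R,ε} s`,
then `t` and `s` are `(R,δ)`-joinable for some `δ ≽ ε`. -/
theorem quantitative_church_rosser {Ω : Type*} [CommMonoid Ω] [CompleteLattice Ω]
    [IsQuantale Ω] (hΩ : Lawverean Ω) {F : GradedSig Ω} (hF : F.IsCBESig)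
    (R : Set (GTerm F × Ω × GTerm F)) (hR : IsTRS R) (hc : Confluent R)
    {ε : Ω} {t s : GTerm F} (h : ConvStar R ε t s) :
    ∃ δ : Ω, ε ≤ δ ∧ Joinable R δ t s :=
  quantitative_church_rosser_general R hc h
end

section
/- If t is a linear term and R is a right-ground (Ω,Φ)-TRS (all right-hand sides of rules are ground), then every narrowing derivation starting from t is basic; equivalently, for every term tᵢ in the derivation, the set of basic positions of tᵢ equals its set of non-variable positions. -/
/-- `σ` is a (syntactic) unifier of `u` and `v`. -/
def IsUnifier {Ω : Type*} {F : GradedSig Ω} (σ : ℕ → GTerm F) (u v : GTerm F) : Prop :=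
  GTerm.subst σ u = GTerm.subst σ v

/-- `σ` is a most general (syntactic) unifier of `u` and `v`. -/
def IsMGU {Ω : Type*} {F : GradedSig Ω} (σ : ℕ → GTerm F) (u v : GTerm F) : Prop :=
  IsUnifier σ u v ∧
    ∀ τ : ℕ → GTerm F, IsUnifier τ u v →
      ∃ ρ : ℕ → GTerm F, ∀ x, GTerm.subst ρ (σ x) = τ x

/-- The substitution renaming variables along `π`. -/
def renameBy {Ω : Type*} {F : GradedSig Ω} (π : ℕ → ℕ) : ℕ → GTerm F :=
  fun v => GTerm.var (π v)

/-- The data of a single narrowing step: the position used, the (renamed-apart) rule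
`deg ⊩ lhs ↦ rhs`, and the most general unifier applied. -/
structure NStep (Ω : Type*) (F : GradedSig Ω) where
  pos : List ℕ
  lhs : GTerm F
  rhs : GTerm F
  deg : Ω
  mgu : ℕ → GTerm F

/-- Validity of a narrowing step `st` from term `t` with respect to `R`:
`st.pos` is a non-variable position of `t`; the rule `st.deg ⊩ st.lhs ↦ st.rhs` is a
renamed-apart variant of a rule of `R` sharing no variables with `t`; and `st.mgu` is a
most general syntactic unifier of `t|_{st.pos}` and `st.lhs`. -/
def StepOK {Ω : Type*} {F : GradedSig Ω} (R : Set (GTerm F × Ω × GTerm F))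
    (t : GTerm F) (st : NStep Ω F) : Prop :=
  st.pos ∈ GTerm.FunPos t ∧
  (∃ (l₀ r₀ : GTerm F) (π : ℕ → ℕ), Function.Injective π ∧ (l₀, st.deg, r₀) ∈ R ∧
    st.lhs = GTerm.subst (renameBy π) l₀ ∧ st.rhs = GTerm.subst (renameBy π) r₀ ∧
    (GTerm.vars st.lhs ∪ GTerm.vars st.rhs) ∩ GTerm.vars t = ∅) ∧
  (∃ u, GTerm.subtermAt t st.pos = some u ∧ IsMGU st.mgu u st.lhs)

/-- The result `(t[rhs]_p)σ` of a narrowing step. -/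
def nnext {Ω : Type*} {F : GradedSig Ω} (t : GTerm F) (st : NStep Ω F) : GTerm F :=
  GTerm.subst st.mgu (GTerm.replaceAt t st.pos st.rhs)

/-- Validity of a narrowing derivation from `t` given by a list of steps. -/
def ValidDeriv {Ω : Type*} {F : GradedSig Ω} (R : Set (GTerm F × Ω × GTerm F)) :
    GTerm F → List (NStep Ω F) → Prop
  | _, [] => True
  | t, st :: l => StepOK R t st ∧ ValidDeriv R (nnext t st) l

/-- One step of the evolution of the set of basic positions:
`B_{i+1} = {q ∈ B_i | p_i ⋢ q} ∪ {p_i.q | q a non-variable position of r_i}`. -/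
def basicNext {Ω : Type*} {F : GradedSig Ω} (B : Set (List ℕ)) (st : NStep Ω F) :
    Set (List ℕ) :=
  {q ∈ B | ¬ st.pos <+: q} ∪ {p | ∃ q ∈ GTerm.FunPos st.rhs, p = st.pos ++ q}

/-- The derivation given by `steps` is basic with respect to the initial set `B` of basic
positions: each narrowing position belongs to the current set of basic positions. -/
def BasicFrom {Ω : Type*} {F : GradedSig Ω} : Set (List ℕ) → List (NStep Ω F) → Prop
  | _, [] => True
  | B, st :: l => st.pos ∈ B ∧ BasicFrom (basicNext B st) l

/-- Along the derivation, the set of basic positions of each intermediate term equals its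
set of non-variable positions. -/
def BasicEqFunPos {Ω : Type*} {F : GradedSig Ω} :
    Set (List ℕ) → GTerm F → List (NStep Ω F) → Prop
  | B, t, [] => B = GTerm.FunPos t
  | B, t, st :: l => B = GTerm.FunPos t ∧ BasicEqFunPos (basicNext B st) (nnext t st) l

/-- One graded narrowing step `t ⤳_{R,σ,∂_p(t)(ε)} (t[rρ]_p)σ`. -/
def Narrow {Ω : Type*} {F : GradedSig Ω} (R : Set (GTerm F × Ω × GTerm F))
    (σ : ℕ → GTerm F) (δ : Ω) (t s : GTerm F) : Prop :=
  ∃ st : NStep Ω F, StepOK R t st ∧ σ = st.mgu ∧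
    δ = GTerm.gradeAt t st.pos st.deg ∧ s = nnext t st

/-- Multi-step graded narrowing `t ⤳*_{R,σ,δ} s`: degrees compose by `⊗` and
substitutions by composition (with the identity substitution and `κ` for zero steps). -/
inductive NarrowStar {Ω : Type*} [Monoid Ω] {F : GradedSig Ω}
    (R : Set (GTerm F × Ω × GTerm F)) :
    (ℕ → GTerm F) → Ω → GTerm F → GTerm F → Prop
  | refl (t) : NarrowStar R GTerm.var 1 t t
  | step {σ₁ σ₂ : ℕ → GTerm F} {ε₁ ε₂ t u s} :
      Narrow R σ₁ ε₁ t u → NarrowStar R σ₂ ε₂ u s →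
      NarrowStar R (fun v => GTerm.subst σ₂ (σ₁ v)) (ε₁ * ε₂) t s

/-! The right-hand side `r` of each rule is ground and the rule shares no variable with the
linear term `t`, so every variable of `t[r]_p` is a variable of `t` occurring outside `t|_p`,
hence a variable of neither unified term. A most general unifier `σ` of `t|_p` and `l` maps
those variables injectively to variables: otherwise, the unifier that agrees with `σ` on the
unified terms and is the identity elsewhere would not factor through `σ`. So `(t[r]_p)σ` is a
renaming of `t[r]_p`; it is again linear, and its non-variable positions are those of `t[r]_p`,
which are exactly the next set of basic positions. -/

namespace GTerm

variable {Ω : Type*} {F : GradedSig Ω}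

theorem subtermAt_append (t : GTerm F) (p q : List ℕ) :
    subtermAt t (p ++ q) = (subtermAt t p).bind (subtermAt · q) := by
  induction t generalizing p with
  | var v => cases p <;> simp [subtermAt]
  | app f args ih =>
    cases p with
    | nil => simp [subtermAt]
    | cons i p =>
      simp only [List.cons_append, subtermAt]
      split
      · exact ih _ p
      · simp

theorem mem_vars_iff {v : ℕ} {t : GTerm F} :
    v ∈ vars t ↔ ∃ p, subtermAt t p = some (var v) := by
  induction t with
  | var w =>
    constructor
    · rintro rfl
      exact ⟨[], rfl⟩
    · rintro ⟨_ | ⟨i, p⟩, hp⟩ <;> simp_all [subtermAt, vars]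
  | app f args ih =>
    simp only [vars, Set.mem_iUnion, ih]
    constructor
    · rintro ⟨j, p, hp⟩
      exact ⟨j :: p, by simp [subtermAt, hp]⟩
    · rintro ⟨_ | ⟨i, p⟩, hp⟩
      · simp [subtermAt] at hp
      · simp only [subtermAt] at hp
        split at hp
        · exact ⟨_, p, hp⟩
        · simp at hp

theorem subst_congr {σ τ : ℕ → GTerm F} {t : GTerm F} (h : ∀ v ∈ vars t, σ v = τ v) :
    subst σ t = subst τ t := by
  induction t with
  | var v => exact h v rfl
  | app f args ih =>
    simp only [subst]
    congr 1
    funext j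
    exact ih j fun v hv => h v (Set.mem_iUnion.2 ⟨j, hv⟩)

theorem vars_subst (σ : ℕ → GTerm F) (t : GTerm F) :
    vars (subst σ t) = ⋃ v ∈ vars t, vars (σ v) := by
  induction t with
  | var v => simp [subst, vars]
  | app f args ih =>
    simp only [subst, vars, ih]
    ext w
    simp only [Set.mem_iUnion]
    exact ⟨fun ⟨j, v, hv, hw⟩ => ⟨v, ⟨j, hv⟩, hw⟩, fun ⟨v, ⟨j, hv⟩, hw⟩ => ⟨j, v, hv, hw⟩⟩

theorem exists_eq_var_of_subst_eq_var {ρ : ℕ → GTerm F} {s : GTerm F} {v : ℕ}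
    (h : subst ρ s = var v) : ∃ w, s = var w := by
  cases s with
  | var w => exact ⟨w, rfl⟩
  | app f args => simp [subst] at h

theorem subtermAt_replaceAt_append (t : GTerm F) (q p : List ℕ) (r : GTerm F) :
    subtermAt (replaceAt t (q ++ p) r) q = (subtermAt t q).map (replaceAt · p r) := by
  induction t generalizing q with
  | var v => cases q <;> simp [replaceAt, subtermAt]
  | app f args ih =>
    cases q with
    | nil => simp [subtermAt]
    | cons i q =>
      simp only [List.cons_append, replaceAt, subtermAt]
      split <;> simp [ih]

theorem subtermAt_replaceAt_self_append (t : GTerm F) (p q : List ℕ) (r : GTerm F) :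
    subtermAt (replaceAt t p r) (p ++ q) = (subtermAt t p).bind fun _ => subtermAt r q := by
  have h := subtermAt_replaceAt_append t p [] r
  rw [List.append_nil] at h
  rw [subtermAt_append, h]
  cases subtermAt t p <;> simp [replaceAt]

theorem subtermAt_replaceAt_of_incomp (t r : GTerm F) {p q : List ℕ}
    (hpq : ¬ p <+: q) (hqp : ¬ q <+: p) :
    subtermAt (replaceAt t p r) q = subtermAt t q := by
  induction t generalizing p q with
  | var v =>
    cases p with
    | nil => exact absurd List.nil_prefix hpq
    | cons i p => simp [replaceAt]
  | app f args ih =>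
    cases p with
    | nil => exact absurd List.nil_prefix hpq
    | cons i p =>
      cases q with
      | nil => exact absurd List.nil_prefix hqp
      | cons j q =>
        simp only [replaceAt, subtermAt]
        split
        · by_cases hji : j = i
          · subst hji
            simp only [List.cons_prefix_cons, true_and] at hpq hqp
            simpa using ih _ hpq hqp
          · simp [hji]
        · rfl

theorem replaceAt_cons_eq_var_iff {s r : GTerm F} {i : ℕ} {p : List ℕ} {v : ℕ} :
    replaceAt s (i :: p) r = var v ↔ s = var v := by
  cases s <;> simp [replaceAt]

theorem replaceAt_cons_eq_app_iff {s r : GTerm F} {i : ℕ} {p : List ℕ} :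
    (∃ f args, replaceAt s (i :: p) r = app f args) ↔ ∃ f args, s = app f args := by
  cases s <;> simp [replaceAt]

theorem subtermAt_replaceAt_eq_var_iff (t r : GTerm F) {p q : List ℕ} {v : ℕ}
    (hpq : ¬ p <+: q) :
    subtermAt (replaceAt t p r) q = some (var v) ↔ subtermAt t q = some (var v) := by
  by_cases hqp : q <+: p
  · obtain ⟨_ | ⟨i, p'⟩, rfl⟩ := hqp
    · simp at hpq
    · simp [subtermAt_replaceAt_append, replaceAt_cons_eq_var_iff]
  · rw [subtermAt_replaceAt_of_incomp t r hpq hqp]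

theorem mem_funPos_replaceAt_iff (t r : GTerm F) {p q : List ℕ} (hpq : ¬ p <+: q) :
    q ∈ FunPos (replaceAt t p r) ↔ q ∈ FunPos t := by
  by_cases hqp : q <+: p
  · obtain ⟨_ | ⟨i, p'⟩, rfl⟩ := hqp
    · simp at hpq
    · simp only [FunPos, Set.mem_ofPred_eq, subtermAt_replaceAt_append, Option.map_eq_some_iff]
      constructor
      · rintro ⟨f, args, s, hs, hrep⟩
        obtain ⟨g, args', rfl⟩ := replaceAt_cons_eq_app_iff.1 ⟨f, args, hrep⟩
        exact ⟨g, args', hs⟩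
      · rintro ⟨f, args, hs⟩
        exact ⟨f, _, _, hs, rfl⟩
  · simp only [FunPos, Set.mem_ofPred_eq, subtermAt_replaceAt_of_incomp t r hpq hqp]

theorem funPos_replaceAt {t : GTerm F} {p : List ℕ} (r : GTerm F) (hp : (subtermAt t p).isSome) :
    FunPos (replaceAt t p r) =
      {q ∈ FunPos t | ¬ p <+: q} ∪ {q | ∃ q' ∈ FunPos r, q = p ++ q'} := by
  ext q
  by_cases hpq : p <+: q
  · obtain ⟨q', rfl⟩ := hpq
    obtain ⟨s, hs⟩ := Option.isSome_iff_exists.1 hp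
    simp [FunPos, subtermAt_replaceAt_self_append, hs]
  · simp only [mem_funPos_replaceAt_iff t r hpq, Set.mem_union, hpq,
      not_false_eq_true, and_true, Set.mem_ofPred_eq, iff_self_or]
    rintro ⟨q', -, rfl⟩
    exact absurd (List.prefix_append p q') hpq

theorem eq_var_or_mem_vars_of_subtermAt_replaceAt {t r : GTerm F} {p q : List ℕ} {v : ℕ}
    (h : subtermAt (replaceAt t p r) q = some (var v)) :
    (¬ p <+: q ∧ subtermAt t q = some (var v)) ∨ v ∈ vars r := by
  by_cases hpq : p <+: q
  · obtain ⟨q', rfl⟩ := hpq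
    rw [subtermAt_replaceAt_self_append, Option.bind_eq_some_iff] at h
    obtain ⟨-, -, hq'⟩ := h
    exact Or.inr (mem_vars_iff.2 ⟨q', hq'⟩)
  · exact Or.inl ⟨hpq, (subtermAt_replaceAt_eq_var_iff t r hpq).1 h⟩

theorem Linear.replaceAt {t r : GTerm F} (hlin : Linear t) (hr : vars r = ∅) (p : List ℕ) :
    Linear (t.replaceAt p r) := by
  intro v q q' hq hq'
  rcases eq_var_or_mem_vars_of_subtermAt_replaceAt hq with ⟨-, hq⟩ | hv
  · rcases eq_var_or_mem_vars_of_subtermAt_replaceAt hq' with ⟨-, hq'⟩ | hv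
    · exact hlin v q q' hq hq'
    · simp [hr] at hv
  · simp [hr] at hv

theorem Linear.vars_replaceAt_subset {t u : GTerm F} {p : List ℕ} (hlin : Linear t)
    (hu : subtermAt t p = some u) (r : GTerm F) :
    vars (t.replaceAt p r) ⊆ (vars t \ vars u) ∪ vars r := by
  intro v hv
  obtain ⟨q, hq⟩ := mem_vars_iff.1 hv
  rcases eq_var_or_mem_vars_of_subtermAt_replaceAt hq with ⟨hpq, hq⟩ | hv
  · refine Or.inl ⟨mem_vars_iff.2 ⟨q, hq⟩, fun hvu => hpq ?_⟩
    obtain ⟨q', hq'⟩ := mem_vars_iff.1 hvu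
    have hocc : subtermAt t (p ++ q') = some (var v) := by
      rw [subtermAt_append, hu]
      exact hq'
    exact hlin v q (p ++ q') hq hocc ▸ List.prefix_append p q'
  · exact Or.inr hv

theorem subtermAt_subst_s18 {σ : ℕ → GTerm F} {t : GTerm F} (h : ∀ v ∈ vars t, ∃ w, σ v = var w)
    (q : List ℕ) : subtermAt (subst σ t) q = (subtermAt t q).map (subst σ) := by
  induction t generalizing q with
  | var v =>
    obtain ⟨w, hw⟩ := h v rfl
    cases q <;> simp [subtermAt, subst, hw]
  | app f args ih =>
    cases q with
    | nil => simp [subtermAt, subst]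
    | cons i q =>
      simp only [subst, subtermAt]
      split
      · exact ih _ (fun v hv => h v (Set.mem_iUnion.2 ⟨_, hv⟩)) q
      · simp

theorem funPos_subst {σ : ℕ → GTerm F} {t : GTerm F} (h : ∀ v ∈ vars t, ∃ w, σ v = var w) :
    FunPos (subst σ t) = FunPos t := by
  ext q
  simp only [FunPos, Set.mem_ofPred_eq, subtermAt_subst_s18 h, Option.map_eq_some_iff]
  constructor
  · rintro ⟨f, args, s, hs, hσs⟩
    cases s with
    | var v =>
      obtain ⟨w, hw⟩ := h v (mem_vars_iff.2 ⟨q, hs⟩)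
      simp [subst, hw] at hσs
    | app g args' => exact ⟨g, args', hs⟩
  · rintro ⟨f, args, hq⟩
    exact ⟨f, _, _, hq, rfl⟩

theorem Linear.subst {σ : ℕ → GTerm F} {t : GTerm F} (hlin : Linear t)
    (h : ∀ v ∈ vars t, ∃ w, σ v = var w) (hinj : Set.InjOn σ (vars t)) :
    Linear (t.subst σ) := by
  have occ : ∀ {q z}, subtermAt (t.subst σ) q = some (var z) →
      ∃ v ∈ vars t, subtermAt t q = some (var v) ∧ σ v = var z := by
    intro q z hq
    rw [subtermAt_subst_s18 h, Option.map_eq_some_iff] at hq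
    obtain ⟨s, hs, hσs⟩ := hq
    obtain ⟨v, rfl⟩ := exists_eq_var_of_subst_eq_var hσs
    exact ⟨v, mem_vars_iff.2 ⟨q, hs⟩, hs, hσs⟩
  intro z q q' hq hq'
  obtain ⟨v, hv, hq, hσv⟩ := occ hq
  obtain ⟨v', hv', hq', hσv'⟩ := occ hq'
  obtain rfl : v = v' := hinj hv hv' (hσv.trans hσv'.symm)
  exact hlin v q q' hq hq'

end GTerm

open GTerm

section MGU

variable {Ω : Type*} {F : GradedSig Ω} {σ : ℕ → GTerm F} {u l : GTerm F}

theorem IsMGU.exists_subst_eq_var (hσ : IsMGU σ u l) :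
    ∃ ρ : ℕ → GTerm F, ∀ v ∉ vars u ∪ vars l, subst ρ (σ v) = var v := by
  classical
  let τ : ℕ → GTerm F := fun v => if v ∈ vars u ∪ vars l then σ v else var v
  have agree : ∀ s, vars s ⊆ vars u ∪ vars l → subst τ s = subst σ s :=
    fun s hs => subst_congr fun v hv => if_pos (hs hv)
  have hτ : IsUnifier τ u l := by
    rw [IsUnifier, agree u Set.subset_union_left, agree l Set.subset_union_right]
    exact hσ.1
  obtain ⟨ρ, hρ⟩ := hσ.2 τ hτ
  exact ⟨ρ, fun v hv => (hρ v).trans (if_neg hv)⟩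

theorem IsMGU.exists_eq_var_of_notMem (hσ : IsMGU σ u l) {v : ℕ}
    (hv : v ∉ vars u ∪ vars l) : ∃ w, σ v = var w :=
  let ⟨_, hρ⟩ := hσ.exists_subst_eq_var
  exists_eq_var_of_subst_eq_var (hρ v hv)

theorem IsMGU.injOn_compl (hσ : IsMGU σ u l) : Set.InjOn σ (vars u ∪ vars l)ᶜ := by
  obtain ⟨ρ, hρ⟩ := hσ.exists_subst_eq_var
  intro v hv v' hv' h
  have : (var v : GTerm F) = var v' := by rw [← hρ v hv, ← hρ v' hv', h]
  exact var.inj this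

end MGU

theorem StepOK.funPos_nnext_and_linear {Ω : Type*} {F : GradedSig Ω}
    {R : Set (GTerm F × Ω × GTerm F)} (hRG : ∀ l ε r, (l, ε, r) ∈ R → vars r = ∅)
    {t : GTerm F} (hlin : t.Linear) {st : NStep Ω F} (hst : StepOK R t st) :
    FunPos (nnext t st) = basicNext (FunPos t) st ∧ (nnext t st).Linear := by
  obtain ⟨-, ⟨l₀, r₀, π, -, hrule, -, hr, hdisj⟩, u, hu, hmgu⟩ := hst
  have hground : vars st.rhs = ∅ := by simp [hr, vars_subst, hRG _ _ _ hrule]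
  have hvars : vars (t.replaceAt st.pos st.rhs) ⊆ (vars u ∪ vars st.lhs)ᶜ := by
    intro v hv
    rcases hlin.vars_replaceAt_subset hu st.rhs hv with ⟨hvt, hvu⟩ | hvr
    · have hvl : v ∉ vars st.lhs := fun hvl => (Set.ext_iff.1 hdisj v).1 ⟨Or.inl hvl, hvt⟩
      simp [hvu, hvl]
    · simp [hground] at hvr
  have hvar : ∀ v ∈ vars (t.replaceAt st.pos st.rhs), ∃ w, st.mgu v = var w :=
    fun v hv => hmgu.exists_eq_var_of_notMem (hvars hv)
  refine ⟨?_, (hlin.replaceAt hground st.pos).subst hvar (hmgu.injOn_compl.mono hvars)⟩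
  rw [nnext, funPos_subst hvar, funPos_replaceAt _ (by simp [hu])]
  rfl

theorem linear_rightground_narrowing_basic_general {Ω : Type*} {F : GradedSig Ω}
    (R : Set (GTerm F × Ω × GTerm F))
    (hRG : ∀ l ε r, (l, ε, r) ∈ R → GTerm.vars r = ∅)
    {t : GTerm F} (hlin : t.Linear) (steps : List (NStep Ω F))
    (h : ValidDeriv R t steps) :
    BasicFrom (GTerm.FunPos t) steps ∧ BasicEqFunPos (GTerm.FunPos t) t steps := by
  induction steps generalizing t with
  | nil => exact ⟨trivial, rfl⟩
  | cons st steps ih =>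
    obtain ⟨hst, hrest⟩ := h
    obtain ⟨hfun, hlin'⟩ := hst.funPos_nnext_and_linear hRG hlin
    rw [BasicFrom, BasicEqFunPos, ← hfun]
    exact ⟨⟨hst.1, (ih hlin' hrest).1⟩, rfl, (ih hlin' hrest).2⟩

/-- If `t` is a linear term and `R` is a right-ground `(Ω,Φ)`-TRS (all right-hand sides
of rules are ground), then every narrowing derivation starting from `t` is basic;
equivalently, for every term `tᵢ` in the derivation, the set of basic positions of `tᵢ`
equals its set of non-variable positions. -/
theorem linear_rightground_narrowing_basic {Ω : Type*} [CommMonoid Ω] [CompleteLattice Ω]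
    [IsQuantale Ω] (hΩ : Lawverean Ω) {F : GradedSig Ω} (hF : F.IsCBESig)
    (R : Set (GTerm F × Ω × GTerm F)) (hR : IsTRS R)
    (hRG : ∀ l ε r, (l, ε, r) ∈ R → GTerm.vars r = ∅)
    {t : GTerm F} (hlin : t.Linear) (steps : List (NStep Ω F))
    (h : ValidDeriv R t steps) :
    BasicFrom (GTerm.FunPos t) steps ∧ BasicEqFunPos (GTerm.FunPos t) t steps :=
  linear_rightground_narrowing_basic_general R hRG hlin steps h
end
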